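/- For every ε ∈ (0, 1/4] and every d ≥ 2 there exists a constant c_ε > 0 (independent of d) and a point set P ⊆ [0,1]^d with disp(P) ≤ ε and #P ≤ c_ε · log(d). -/

import Mathlib

/-!
Fix `k` with `2⁻ᵏ < ε` and put `K = k 2ᵏ`. A box in `[0,1]^d` of volume `> 2⁻ᵏ` has all sides
`> 2⁻ᵏ`, and since `(1 - 2⁻ᵏ)^K ≤ e⁻ᵏ ≤ 2⁻ᵏ`, at most `K` of its sides are `≤ 1 - 2⁻ᵏ`. Each short
side contains one of the dyadic points `i / 2ᵏ` (`1 ≤ i < 2ᵏ`) in its interior, each long side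
contains all of them. So it suffices to choose grid points that form a covering array of strength
`K`: every prescription of grid values on at most `K` coordinates is met by one of the points.
By a union bound over the at most `(K + 1) d^K (2ᵏ - 1)^K` prescriptions, `n` uniformly random
grid points fail to do so with probability `< 1` as soon as `n ≥ C_k log d`.
-/

open Finset Fintype

variable {ι α : Type*}

/-- Condition (S) of Sosnovec's construction. -/
def IsCoveringArray {ρ : Type*} (K : ℕ) (ω : ρ → ι → α) : Prop :=
  ∀ T : Finset ι, #T ≤ K → ∀ w : ι → α, ∃ i, ∀ j ∈ T, ω i j = w j

theorem cast_card_biUnion_le_card_mul [DecidableEq α] (s : Finset ι) (t : ι → Finset α) (c : ℝ)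
    (h : ∀ i ∈ s, (#(t i) : ℝ) ≤ c) : (#(s.biUnion t) : ℝ) ≤ #s * c := by
  calc (#(s.biUnion t) : ℝ) ≤ ∑ i ∈ s, (#(t i) : ℝ) := by exact_mod_cast card_biUnion_le
    _ ≤ #s * c := by simpa using sum_le_card_nsmul s _ c h

section Counting

variable [Fintype ι] [Fintype α]

theorem card_filter_card_le_le [DecidableEq ι] [Nonempty ι] (K : ℕ) :
    #{T : Finset ι | #T ≤ K} ≤ (K + 1) * card ι ^ K := by
  have hsub : ({T : Finset ι | #T ≤ K} : Finset _) ⊆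
      (range (K + 1)).biUnion fun s => powersetCard s univ := by
    intro T hT
    simp only [mem_filter, mem_univ, true_and] at hT
    simp only [mem_biUnion, mem_range, mem_powersetCard_univ, exists_eq_right']
    omega
  calc #{T : Finset ι | #T ≤ K}
      ≤ #((range (K + 1)).biUnion fun s => powersetCard s (univ : Finset ι)) := card_le_card hsub
    _ ≤ #(range (K + 1)) * card ι ^ K := card_biUnion_le_card_mul _ _ _ fun s hs => by
        rw [card_powersetCard, card_univ]
        exact (Nat.choose_le_pow _ _).trans
          (Nat.pow_le_pow_right Fintype.card_pos (by simpa [Nat.lt_succ_iff] using hs))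
    _ = (K + 1) * card ι ^ K := by rw [card_range]

theorem card_filter_forall_mem_eq [DecidableEq ι] [DecidableEq α] (T : Finset ι) (w : ι → α) :
    #{x : ι → α | ∀ j ∈ T, x j = w j} = card α ^ #Tᶜ := by
  have hpi : ({x : ι → α | ∀ j ∈ T, x j = w j} : Finset _) =
      piFinset fun j => if j ∈ T then {w j} else univ := by
    ext x
    simp only [mem_filter, mem_univ, true_and, mem_piFinset]
    refine forall_congr' fun j => ?_
    split_ifs <;> simp [*]
  rw [hpi, card_piFinset]
  simp [apply_ite card, prod_ite, filter_not, compl_eq_univ_sdiff]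

theorem card_filter_not_forall_mem_eq_le [DecidableEq ι] [DecidableEq α] [Nonempty α] {K : ℕ}
    {T : Finset ι} (hT : #T ≤ K) (w : ι → α) :
    (#{x : ι → α | ¬ ∀ j ∈ T, x j = w j} : ℝ) ≤
      card α ^ card ι * (1 - ((card α : ℝ) ^ K)⁻¹) := by
  have hsplit := card_filter_add_card_filter_not (s := (univ : Finset (ι → α)))
    (fun x => ∀ j ∈ T, x j = w j)
  rw [card_filter_forall_mem_eq, card_univ, card_fun] at hsplit
  have hN : (1 : ℝ) ≤ card α := by exact_mod_cast Fintype.card_pos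
  have hpow : (card α : ℝ) ^ card ι ≤ card α ^ #Tᶜ * card α ^ K := by
    rw [← pow_add]
    exact pow_le_pow_right₀ hN (by rw [card_compl]; omega)
  have hbad : (#{x : ι → α | ¬ ∀ j ∈ T, x j = w j} : ℝ) = card α ^ card ι - card α ^ #Tᶜ := by
    have := congrArg (Nat.cast (R := ℝ)) hsplit
    push_cast at this
    linarith
  have hdiv : (card α : ℝ) ^ card ι * ((card α : ℝ) ^ K)⁻¹ ≤ card α ^ #Tᶜ := by
    rwa [← div_eq_mul_inv, div_le_iff₀ (by positivity)]
  rw [hbad, mul_one_sub]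
  linarith

theorem exists_isCoveringArray [Nonempty ι] [Nonempty α] (K n : ℕ)
    (h : (K + 1) * (card ι : ℝ) ^ K * (card α : ℝ) ^ K * (1 - ((card α : ℝ) ^ K)⁻¹) ^ n < 1) :
    ∃ ω : Fin n → ι → α, IsCoveringArray K ω := by
  classical
  obtain ⟨a₀⟩ := ‹Nonempty α›
  by_contra! hbad
  simp only [IsCoveringArray, not_forall, not_exists] at hbad
  set N : ℝ := card α
  have hN : 1 ≤ N := Nat.one_le_cast.2 Fintype.card_pos
  set B : ℝ := (N ^ card ι * (1 - (N ^ K)⁻¹)) ^ n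
  have hq : (N ^ K)⁻¹ ≤ 1 := inv_le_one_of_one_le₀ (one_le_pow₀ hN)
  have hB : 0 ≤ B := pow_nonneg (mul_nonneg (by positivity) (sub_nonneg.2 hq)) n
  let failures (T : Finset ι) (w : ι → α) : Finset (Fin n → ι → α) :=
    piFinset fun _ => {x | ¬ ∀ j ∈ T, x j = w j}
  -- a prescription on `T` only matters on `T`, so it may be taken constant off `T`
  have hcover : (univ : Finset (Fin n → ι → α)) ⊆
      ({T : Finset ι | #T ≤ K} : Finset _).biUnion fun T =>
        ({w : ι → α | ∀ j ∈ Tᶜ, w j = a₀} : Finset _).biUnion (failures T) := by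
    intro ω _
    obtain ⟨T, hT, w, hw⟩ := hbad ω
    simp only [mem_biUnion, mem_filter, mem_univ, true_and]
    refine ⟨T, hT, fun j => if j ∈ T then w j else a₀, fun j hj => by simp_all, ?_⟩
    simp only [failures, mem_piFinset, mem_filter, mem_univ, true_and]
    intro i
    obtain ⟨j, hj, hne⟩ := hw i
    exact fun h => hne (by simpa [hj] using h j hj)
  have hfailures (T : Finset ι) (hT : #T ≤ K) (w : ι → α) : (#(failures T w) : ℝ) ≤ B := by
    rw [card_piFinset, prod_const, card_univ, Fintype.card_fin, Nat.cast_pow]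
    exact pow_le_pow_left₀ (Nat.cast_nonneg _) (card_filter_not_forall_mem_eq_le hT w) n
  have hprescriptions (T : Finset ι) (hT : #T ≤ K) :
      (#({w : ι → α | ∀ j ∈ Tᶜ, w j = a₀} : Finset _) : ℝ) ≤ N ^ K := by
    have hcard := card_filter_forall_mem_eq Tᶜ fun _ : ι => a₀
    beta_reduce at hcard
    rw [hcard, compl_compl, Nat.cast_pow]
    exact pow_le_pow_right₀ hN hT
  have hsupports : (#({T : Finset ι | #T ≤ K} : Finset _) : ℝ) ≤ (K + 1) * card ι ^ K := by
    exact_mod_cast card_filter_card_le_le K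
  refine (Nat.cast_le (α := ℝ)).2 (card_le_card hcover) |>.not_gt ?_
  calc _ ≤ (#({T : Finset ι | #T ≤ K} : Finset _) : ℝ) * (N ^ K * B) := by
        refine cast_card_biUnion_le_card_mul _ _ _ fun T hT => ?_
        rw [mem_filter] at hT
        exact (cast_card_biUnion_le_card_mul _ _ _ fun w _ => hfailures T hT.2 w).trans
          (mul_le_mul_of_nonneg_right (hprescriptions T hT.2) hB)
    _ ≤ (K + 1) * card ι ^ K * (N ^ K * B) := by gcongr
    _ = ((K + 1) * card ι ^ K * N ^ K * (1 - (N ^ K)⁻¹) ^ n) * (N ^ card ι) ^ n := by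
        simp only [B, mul_pow]
        ring
    _ < 1 * (N ^ card ι) ^ n := by gcongr
    _ = #(univ : Finset (Fin n → ι → α)) := by simp [N]

end Counting

theorem exists_nat_lt_and_le_mul {a b q x₀ : ℝ} (ha : 0 ≤ a) (hb : 0 ≤ b) (hq : 0 < q)
    (hx₀ : 0 < x₀) : ∃ C > 0, ∀ x ≥ x₀, ∃ n : ℕ, a + b * x < q * n ∧ (n : ℝ) ≤ C * x := by
  refine ⟨(a / x₀ + b) / q + 1 / x₀, by positivity, fun x hx => ?_⟩
  have hx0 : 0 < x := hx₀.trans_le hx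
  refine ⟨⌊(a + b * x) / q⌋₊ + 1, ?_, ?_⟩
  · rw [← div_lt_iff₀' hq]
    exact_mod_cast Nat.lt_floor_add_one _
  · have hfloor : (⌊(a + b * x) / q⌋₊ : ℝ) ≤ (a + b * x) / q := Nat.floor_le (by positivity)
    have hone : 1 ≤ 1 / x₀ * x := by rwa [one_div_mul_eq_div, one_le_div hx₀]
    have ha' : a ≤ a / x₀ * x := by rw [div_mul_eq_mul_div, le_div_iff₀ hx₀]; gcongr
    have hmain : (a + b * x) / q ≤ (a / x₀ + b) / q * x := by
      rw [div_mul_eq_mul_div]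
      gcongr
      linarith
    push_cast
    linarith

theorem exists_isCoveringArray_le_mul_log (K : ℕ) (α : Type*) [Fintype α] [Nonempty α] :
    ∃ C > 0, ∀ d : ℕ, 2 ≤ d →
      ∃ n : ℕ, (n : ℝ) ≤ C * Real.log d ∧ ∃ ω : Fin n → Fin d → α, IsCoveringArray K ω := by
  set N : ℝ := card α
  have hN : 1 ≤ N := Nat.one_le_cast.2 Fintype.card_pos
  have hA : 1 ≤ (K + 1) * N ^ K := one_le_mul_of_one_le_of_one_le (by simp) (one_le_pow₀ hN)
  obtain ⟨C, hC, hn⟩ := exists_nat_lt_and_le_mul (Real.log_nonneg hA) K.cast_nonneg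
    (inv_pos.2 (pow_pos (zero_lt_one.trans_le hN) K)) (Real.log_pos one_lt_two)
  refine ⟨C, hC, fun d hd => ?_⟩
  have hd2 : (2 : ℝ) ≤ d := by exact_mod_cast hd
  obtain ⟨n, hlt, hle⟩ := hn (Real.log d) (Real.log_le_log two_pos hd2)
  have : NeZero d := ⟨by omega⟩
  refine ⟨n, hle, exists_isCoveringArray K n ?_⟩
  have hq : (N ^ K)⁻¹ ≤ 1 := inv_le_one_of_one_le₀ (one_le_pow₀ hN)
  calc (K + 1) * (card (Fin d) : ℝ) ^ K * N ^ K * (1 - (N ^ K)⁻¹) ^ n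
      ≤ (K + 1) * N ^ K * (d : ℝ) ^ K * Real.exp (-(N ^ K)⁻¹) ^ n := by
        rw [Fintype.card_fin, mul_right_comm _ _ (N ^ K)]
        exact mul_le_mul_of_nonneg_left
          (pow_le_pow_left₀ (sub_nonneg.2 hq) (Real.one_sub_le_exp_neg _) n) (by positivity)
    _ = Real.exp (Real.log ((K + 1) * N ^ K) + K * Real.log d - (N ^ K)⁻¹ * n) := by
        rw [Real.exp_sub, Real.exp_add, Real.exp_log (by positivity), ← Real.log_pow,
          Real.exp_log (by positivity), ← Real.exp_nat_mul, div_eq_mul_inv, ← Real.exp_neg]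
        ring_nf
    _ < 1 := Real.exp_lt_one_iff.2 (by linarith)

/-- The points `i / 2 ^ k`, `1 ≤ i ≤ 2 ^ k - 1`, of the grid `M_k`, indexed by `i - 1`. -/
noncomputable def dyadicPoint (k : ℕ) (m : Fin (2 ^ k - 1)) : ℝ := (m + 1) / 2 ^ k

theorem dyadicPoint_mem_Icc (k : ℕ) (m : Fin (2 ^ k - 1)) :
    dyadicPoint k m ∈ Set.Icc (2 ^ k : ℝ)⁻¹ (1 - (2 ^ k)⁻¹) := by
  have hm : ((m : ℕ) : ℝ) + 2 ≤ 2 ^ k := by exact_mod_cast (by omega : (m : ℕ) + 2 ≤ 2 ^ k)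
  rw [dyadicPoint, Set.mem_Icc, inv_eq_one_div, div_le_div_iff_of_pos_right (by positivity),
    one_sub_div (by positivity), div_le_div_iff_of_pos_right (by positivity)]
  constructor <;> linarith [m.val.cast_nonneg (α := ℝ)]

theorem exists_dyadicPoint_mem_Ioo (k : ℕ) {a b : ℝ} (ha : 0 ≤ a) (hb : b ≤ 1)
    (hab : (2 ^ k : ℝ)⁻¹ < b - a) : ∃ m, dyadicPoint k m ∈ Set.Ioo a b := by
  have h2k : (0 : ℝ) < 2 ^ k := by positivity
  have hlt : a * 2 ^ k + 1 < b * 2 ^ k := by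
    have := mul_lt_mul_of_pos_right hab h2k
    rw [inv_mul_cancel₀ h2k.ne', sub_mul] at this
    linarith
  set i := ⌊a * 2 ^ k⌋₊
  have hi : (i : ℝ) ≤ a * 2 ^ k := Nat.floor_le (by positivity)
  have hi_lt : i + 1 < 2 ^ k := by exact_mod_cast (by nlinarith : (i + 1 : ℝ) < 2 ^ k)
  refine ⟨⟨i, by omega⟩, ?_⟩
  rw [dyadicPoint, Set.mem_Ioo, lt_div_iff₀ h2k, div_lt_iff₀ h2k]
  exact ⟨Nat.lt_floor_add_one _, by push_cast; linarith⟩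

theorem one_sub_inv_two_pow_pow_le (k : ℕ) :
    (1 - (2 ^ k : ℝ)⁻¹) ^ (k * 2 ^ k) ≤ (2 ^ k)⁻¹ := by
  rcases Nat.eq_zero_or_pos k with rfl | hk
  · simp
  have hk' : (0 : ℝ) < k := by exact_mod_cast hk
  have h : (2 ^ k : ℝ)⁻¹ = k / ((k * 2 ^ k : ℕ) : ℝ) := by
    push_cast
    field_simp
  calc (1 - (2 ^ k : ℝ)⁻¹) ^ (k * 2 ^ k) ≤ Real.exp (-k) := by
        rw [h]
        refine Real.one_sub_div_pow_le_exp_neg ?_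
        push_cast
        nlinarith [one_le_pow₀ (M₀ := ℝ) (n := k) one_le_two]
    _ ≤ (2 ^ k)⁻¹ := by
        rw [Real.exp_neg, ← Real.exp_one_pow]
        gcongr
        linarith [Real.add_one_le_exp 1]

section UnitCube

variable [Fintype ι] {s : ι → ℝ}

theorem prod_le_of_nonneg_of_le_one (hs₀ : ∀ j, 0 ≤ s j) (hs₁ : ∀ j, s j ≤ 1) (j : ι) :
    ∏ i, s i ≤ s j := by
  classical
  simpa using prod_le_prod_of_subset_of_le_one (subset_univ {j}) (fun i _ => hs₀ i)
    fun i _ _ => hs₁ i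

theorem prod_le_pow_card_filter_le (hs₀ : ∀ j, 0 ≤ s j) (hs₁ : ∀ j, s j ≤ 1) (c : ℝ) :
    ∏ i, s i ≤ c ^ #{j | s j ≤ c} := by
  calc ∏ i, s i ≤ ∏ i with s i ≤ c, s i :=
        prod_le_prod_of_subset_of_le_one (filter_subset _ _) (fun i _ => hs₀ i)
          fun i _ _ => hs₁ i
    _ ≤ c ^ #{j | s j ≤ c} := by
        rw [← prod_const]
        exact prod_le_prod (fun i _ => hs₀ i) fun i hi => (mem_filter.1 hi).2

end UnitCube

theorem prod_sub_le_of_isCoveringArray {ρ : Type*} [Fintype ι] [DecidableEq ι] (k : ℕ)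
    {ω : ρ → ι → Fin (2 ^ k - 1)} (hω : IsCoveringArray (k * 2 ^ k) ω) {a b : ι → ℝ}
    (ha : ∀ j, 0 ≤ a j) (hab : ∀ j, a j ≤ b j) (hb : ∀ j, b j ≤ 1)
    (hempty : ∀ i, ∃ j, dyadicPoint k (ω i j) ∉ Set.Ioo (a j) (b j)) :
    ∏ j, (b j - a j) ≤ (2 ^ k)⁻¹ := by
  by_contra! hvol
  set h : ℝ := (2 ^ k)⁻¹
  have hside₀ j : 0 ≤ b j - a j := sub_nonneg.2 (hab j)
  have hside₁ j : b j - a j ≤ 1 := by linarith [ha j, hb j]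
  have hside j : h < b j - a j := hvol.trans_le (prod_le_of_nonneg_of_le_one hside₀ hside₁ j)
  set T : Finset ι := {j | b j - a j ≤ 1 - h}
  have hT : #T ≤ k * 2 ^ k := by
    by_contra! hT
    have hh₀ : 0 < h := by positivity
    have hh₁ : h ≤ 1 := inv_le_one_of_one_le₀ (one_le_pow₀ one_le_two)
    have := (prod_le_pow_card_filter_le hside₀ hside₁ (1 - h)).trans
      ((pow_le_pow_of_le_one (by linarith) (by linarith) hT.le).trans
        (one_sub_inv_two_pow_pow_le k))
    linarith
  choose w hw using fun j => exists_dyadicPoint_mem_Ioo k (ha j) (hb j) (hside j)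
  obtain ⟨i, hi⟩ := hω T hT w
  obtain ⟨j, hj⟩ := hempty i
  refine hj ?_
  by_cases hjT : j ∈ T
  · exact hi j hjT ▸ hw j
  · have hlong : 1 - h < b j - a j := by
      simp only [T, mem_filter, mem_univ, true_and, not_le] at hjT
      exact hjT
    have hp := dyadicPoint_mem_Icc k (ω i j)
    constructor <;> linarith [hp.1, hp.2, ha j, hb j]

theorem stmt_13_general (ε : ℝ) (hε : 0 < ε) :
    ∃ c : ℝ, 0 < c ∧ ∀ d : ℕ, 2 ≤ d →
      ∃ P : Finset (Fin d → ℝ),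
        (∀ x ∈ P, ∀ j, x j ∈ Set.Icc (0 : ℝ) 1) ∧
        (P.card : ℝ) ≤ c * Real.log d ∧
        ∀ (a b : Fin d → ℝ) (I : Fin d → Set ℝ),
          (∀ j, 0 ≤ a j ∧ a j ≤ b j ∧ b j ≤ 1) →
          (∀ j, Set.Ioo (a j) (b j) ⊆ I j ∧ I j ⊆ Set.Icc (a j) (b j)) →
          (∀ x ∈ P, ∃ j, x j ∉ I j) →
          ∏ j, (b j - a j) ≤ ε := by
  obtain ⟨k, hk⟩ := exists_pow_lt_of_lt_one hε (by norm_num : (2 : ℝ)⁻¹ < 1)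
  have : Nonempty (Fin (2 ^ (k + 1) - 1)) :=
    ⟨⟨0, Nat.sub_pos_of_lt (Nat.one_lt_two_pow k.succ_ne_zero)⟩⟩
  obtain ⟨C, hC, hcov⟩ :=
    exists_isCoveringArray_le_mul_log ((k + 1) * 2 ^ (k + 1)) (Fin (2 ^ (k + 1) - 1))
  refine ⟨C, hC, fun d hd => ?_⟩
  obtain ⟨n, hn, ω, hω⟩ := hcov d hd
  refine ⟨univ.image fun i j => dyadicPoint (k + 1) (ω i j), ?_, ?_, ?_⟩
  · simp only [mem_image, mem_univ, true_and, forall_exists_index]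
    rintro _ i rfl j
    have hp := dyadicPoint_mem_Icc (k + 1) (ω i j)
    have hh : (0 : ℝ) < (2 ^ (k + 1))⁻¹ := by positivity
    exact ⟨by linarith [hp.1], by linarith [hp.2]⟩
  · exact (Nat.cast_le.2 (card_image_le.trans_eq (Finset.card_fin n))).trans hn
  · intro a b I hab hI hP
    refine (prod_sub_le_of_isCoveringArray (k + 1) hω (fun j => (hab j).1)
      (fun j => (hab j).2.1) (fun j => (hab j).2.2) fun i => ?_).trans ?_
    · obtain ⟨j, hj⟩ := hP _ (mem_image_of_mem _ (mem_univ i))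
      exact ⟨j, fun hmem => hj ((hI j).1 hmem)⟩
    · calc (2 ^ (k + 1) : ℝ)⁻¹ = 2⁻¹ ^ (k + 1) := by rw [inv_pow]
        _ ≤ 2⁻¹ ^ k := pow_le_pow_of_le_one (by norm_num) (by norm_num) k.le_succ
        _ ≤ ε := hk.le

/-- Sosnovec's theorem: for every `ε ∈ (0,1/4]` there is a constant `c_ε > 0` such that
for every `d ≥ 2` there is a point set `P ⊆ [0,1]^d` with `disp(P) ≤ ε` and
`#P ≤ c_ε · log d` (every axis-parallel box disjoint from `P` has volume `≤ ε`). -/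
theorem stmt_13 (ε : ℝ) (hε : 0 < ε) (hε' : ε ≤ 1 / 4) :
    ∃ c : ℝ, 0 < c ∧ ∀ d : ℕ, 2 ≤ d →
      ∃ P : Finset (Fin d → ℝ),
        (∀ x ∈ P, ∀ j, x j ∈ Set.Icc (0 : ℝ) 1) ∧
        (P.card : ℝ) ≤ c * Real.log d ∧
        ∀ (a b : Fin d → ℝ) (I : Fin d → Set ℝ),
          (∀ j, 0 ≤ a j ∧ a j ≤ b j ∧ b j ≤ 1) →
          (∀ j, Set.Ioo (a j) (b j) ⊆ I j ∧ I j ⊆ Set.Icc (a j) (b j)) →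
          (∀ x ∈ P, ∃ j, x j ∉ I j) →
          ∏ j, (b j - a j) ≤ ε :=
  stmt_13_general ε hε
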